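/- arXiv:2208.13754 — 5 statements merged into one kernel-verified Lean document; each statement's English description precedes it below -/
import Mathlib

section
/- Let H be a complex inner product space and let γ0, γ1, γ+ be unit vectors in H with γ+ = a·γ0 + b·γ1 for complex numbers a, b. Set T := |a|² + |b|² and assume 2T − 1 > 0. Then the vector γ− := (conj(b)·γ0 − conj(a)·γ1)/√(2T − 1) is also a unit vector (i.e., ‖γ−‖ = 1). -/
/-- If `γ0, γ1, γ+` are unit vectors in a complex inner product space with
`γ+ = a • γ0 + b • γ1`, `T = |a|² + |b|²` and `2T - 1 > 0`, then
`γ- = (conj b • γ0 - conj a • γ1) / √(2T - 1)` is a unit vector. -/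
theorem gamma_minus_unit {H : Type*} [NormedAddCommGroup H] [InnerProductSpace ℂ H]
    (γ0 γ1 γp : H) (a b : ℂ) (T : ℝ)
    (h0 : ‖γ0‖ = 1) (h1 : ‖γ1‖ = 1) (hp : ‖γp‖ = 1)
    (hplus : γp = a • γ0 + b • γ1)
    (hT : T = ‖a‖ ^ 2 + ‖b‖ ^ 2)
    (hpos : 0 < 2 * T - 1) :
    ‖((Real.sqrt (2 * T - 1) : ℂ))⁻¹ •
      ((starRingEnd ℂ b) • γ0 - (starRingEnd ℂ a) • γ1)‖ = 1 := by
  have h2 : ‖a • γ0 + b • γ1‖ = 1 := by rw [← hplus]; exact hp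
  have hadd := @norm_add_sq ℂ H _ _ _ (a • γ0) (b • γ1)
  have hsub := @norm_sub_sq ℂ H _ _ _ ((starRingEnd ℂ b) • γ0) ((starRingEnd ℂ a) • γ1)
  rw [inner_smul_left, inner_smul_right] at hadd hsub
  have harg : (starRingEnd ℂ) ((starRingEnd ℂ) b) *
      ((starRingEnd ℂ) a * @inner ℂ H _ γ0 γ1) =
      (starRingEnd ℂ) a * (b * @inner ℂ H _ γ0 γ1) := by
    rw [RingHomCompTriple.comp_apply, RingHom.id_apply]; ring
  rw [harg] at hsub
  simp only [norm_smul, h0, h1, h2, mul_one, one_pow] at hadd hsub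
  have hnc : ∀ z : ℂ, ‖(starRingEnd ℂ) z‖ = ‖z‖ := fun z => RCLike.norm_conj z
  rw [hnc, hnc] at hsub
  have key : ‖(starRingEnd ℂ b) • γ0 - (starRingEnd ℂ a) • γ1‖ ^ 2 = 2 * T - 1 := by
    rw [hsub]; rw [hT]; nlinarith [hadd]
  have hnn : (0:ℝ) ≤ ‖(starRingEnd ℂ b) • γ0 - (starRingEnd ℂ a) • γ1‖ := norm_nonneg _
  have hnorm : ‖(starRingEnd ℂ b) • γ0 - (starRingEnd ℂ a) • γ1‖ = Real.sqrt (2 * T - 1) := by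
    rw [← key, Real.sqrt_sq hnn]
  rw [norm_smul, hnorm, norm_inv, Complex.norm_real, Real.norm_eq_abs,
    abs_of_nonneg (Real.sqrt_nonneg _)]
  rw [inv_mul_cancel₀ (Real.sqrt_ne_zero'.mpr hpos)]
end

section
/- Let H be a complex vector space, let γ0, γ1 ∈ H, let a, b be complex numbers with T := |a|² + |b|² > 1/2, and set γ+ := a·γ0 + b·γ1, γ− := (conj(b)·γ0 − conj(a)·γ1)/√(2T − 1). In ℂ² with standard basis e0, e1, set ξ+ := (conj(a)·e0 + conj(b)·e1)/√T and ξ− := (b·e0 − a·e1)/√T. Then in the tensor product ℂ² ⊗[ℂ] H the following identity holds: (e0 ⊗ γ0 + e1 ⊗ γ1)/√2 = (ξ+ ⊗ γ+ + √(2T − 1)·(ξ− ⊗ γ−))/√(2T). -/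
open scoped TensorProduct

/-!
Writing `ξ± ⊗ γ±` in the bases `e₀, e₁` and `γ₀, γ₁`, the cross terms `e₀ ⊗ γ₁` and `e₁ ⊗ γ₀`
cancel between the two summands, while each diagonal term picks up the factor
`conj a · a + conj b · b = T`. Hence `ξ₊ ⊗ γ₊ + √(2T-1) (ξ₋ ⊗ γ₋) = √T (e₀ ⊗ γ₀ + e₁ ⊗ γ₁)`,
and dividing by `√(2T) = √2 √T` gives the claim.
-/

namespace TensorProduct

variable {R M N : Type*} [CommRing R] [AddCommGroup M] [Module R M] [AddCommGroup N] [Module R N]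

theorem add_tmul_add_add_sub_tmul_sub (x₀ x₁ : M) (y₀ y₁ : N) (a b c d : R) :
    (c • x₀ + d • x₁) ⊗ₜ[R] (a • y₀ + b • y₁) + (b • x₀ - a • x₁) ⊗ₜ[R] (d • y₀ - c • y₁) =
      (c * a + d * b) • (x₀ ⊗ₜ[R] y₀ + x₁ ⊗ₜ[R] y₁) := by
  simp only [add_tmul, sub_tmul, tmul_add, tmul_sub, ← smul_tmul', tmul_smul, smul_add,
    smul_sub, smul_smul, add_smul]
  match_scalars <;> ring

end TensorProduct

/-- The entangled state identity: with `γ+ = a • γ0 + b • γ1`,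
`γ- = (conj b • γ0 - conj a • γ1)/√(2T-1)`, `ξ+ = (conj a • e0 + conj b • e1)/√T`,
`ξ- = (b • e0 - a • e1)/√T` and `T = |a|² + |b|² > 1/2`, one has
`(e0 ⊗ γ0 + e1 ⊗ γ1)/√2 = (ξ+ ⊗ γ+ + √(2T-1) (ξ- ⊗ γ-))/√(2T)` in `ℂ² ⊗[ℂ] H`. -/
theorem entangled_state_identity {H : Type*} [AddCommGroup H] [Module ℂ H]
    (γ0 γ1 : H) (a b : ℂ) (T : ℝ)
    (hT : T = ‖a‖ ^ 2 + ‖b‖ ^ 2) (hThalf : 1 / 2 < T) :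
    let e0 : EuclideanSpace ℂ (Fin 2) := EuclideanSpace.single 0 1
    let e1 : EuclideanSpace ℂ (Fin 2) := EuclideanSpace.single 1 1
    let γp : H := a • γ0 + b • γ1
    let γm : H := ((Real.sqrt (2 * T - 1) : ℂ))⁻¹ •
      ((starRingEnd ℂ b) • γ0 - (starRingEnd ℂ a) • γ1)
    let ξp : EuclideanSpace ℂ (Fin 2) :=
      ((Real.sqrt T : ℂ))⁻¹ • ((starRingEnd ℂ a) • e0 + (starRingEnd ℂ b) • e1)
    let ξm : EuclideanSpace ℂ (Fin 2) :=
      ((Real.sqrt T : ℂ))⁻¹ • (b • e0 - a • e1)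
    ((Real.sqrt 2 : ℂ))⁻¹ • (e0 ⊗ₜ[ℂ] γ0 + e1 ⊗ₜ[ℂ] γ1) =
      ((Real.sqrt (2 * T) : ℂ))⁻¹ •
        (ξp ⊗ₜ[ℂ] γp + ((Real.sqrt (2 * T - 1) : ℂ)) • (ξm ⊗ₜ[ℂ] γm)) := by
  intro e0 e1 γp γm ξp ξm
  have hT0 : 0 < T := by linarith
  have hsqrtT : (Real.sqrt T : ℂ) ≠ 0 := by
    exact_mod_cast (Real.sqrt_pos.2 hT0).ne'
  have hsqrt2T1 : (Real.sqrt (2 * T - 1) : ℂ) ≠ 0 := by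
    exact_mod_cast (Real.sqrt_pos.2 (by linarith)).ne'
  have hnorm : starRingEnd ℂ a * a + starRingEnd ℂ b * b = Real.sqrt T * Real.sqrt T := by
    rw [Complex.conj_mul', Complex.conj_mul', ← Complex.ofReal_mul,
      Real.mul_self_sqrt hT0.le, hT]
    push_cast; ring
  have hsum : ξp ⊗ₜ[ℂ] γp + (Real.sqrt (2 * T - 1) : ℂ) • (ξm ⊗ₜ[ℂ] γm) =
      (Real.sqrt T : ℂ) • (e0 ⊗ₜ[ℂ] γ0 + e1 ⊗ₜ[ℂ] γ1) := by
    simp only [ξp, ξm, γp, γm, ← TensorProduct.smul_tmul', TensorProduct.tmul_smul, smul_smul]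
    rw [mul_inv_cancel_left₀ hsqrt2T1, ← smul_add,
      TensorProduct.add_tmul_add_add_sub_tmul_sub, smul_smul, hnorm, inv_mul_cancel_left₀ hsqrtT]
  rw [hsum, smul_smul, Real.sqrt_mul zero_le_two, Complex.ofReal_mul, mul_inv,
    inv_mul_cancel_right₀ hsqrtT]
end

section
/- Let N = a + b with a, b positive integers, and let Ω be a probability space carrying random variables Z₁, …, Z_N taking values in {0,1} and a random subset Π of {1,…,N} that is uniformly distributed over all subsets of size a and is independent of (Z₁, …, Z_N). Then for any δ ≥ 0 and ν > 0, the probability that simultaneously Σ_{i∈Π} Z_i ≤ a·δ and Σ_{i∉Π} Z_i ≥ b·(δ + ν) is at most exp(−2·b·a²·ν² / ((a + b)·(a + 1))). -/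
/-!
Fix the value `z` of the 0/1 vector `Z`, say with `m` ones. Since `Π` is uniform and independent
of `Z`, the probability is at most the largest fraction, over such `z`, of the `a`-subsets `s` on
which the event holds. For the complement `u = sᶜ`, of size `b`, the event forces the number of
ones in `u` to exceed its mean `b m / N` by `ε = a b ν / N`, and Serfling's inequality bounds the
fraction of such `u` by `exp (-2 ε² N / (b (a + 1)))`, which is the claimed bound.

Serfling's inequality follows by the Chernoff method. Removing a uniform element from a sample of
size `n + 1` out of `n + 1 + r` expresses the moment generating function of the number of ones in
the sample through those for samples of size `n`, up to a Bernoulli factor that Hoeffding's lemma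
bounds by `exp ((t r / (n + r))² / 8)`; finally `∑_{k=r}^{n+r-1} (r/k)² ≤ n (r + 1) / (n + r)`.
-/

open MeasureTheory ProbabilityTheory Finset Real
open scoped ENNReal

lemma one_sub_add_mul_exp_le (p s : ℝ) (hp0 : 0 ≤ p) (hp1 : p ≤ 1) :
    (1 - p) + p * exp s ≤ exp (p * s + s ^ 2 / 8) := by
  let μ : Measure ℝ :=
    ENNReal.ofReal p • Measure.dirac (1 - p) + ENNReal.ofReal (1 - p) • Measure.dirac (-p)
  have hq0 : 0 ≤ 1 - p := sub_nonneg.2 hp1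
  have : IsProbabilityMeasure μ := ⟨by simp [μ, ← ENNReal.ofReal_add hp0 hq0]⟩
  have hint (f : ℝ → ℝ) : ∫ x, f x ∂μ = p * f (1 - p) + (1 - p) * f (-p) := by
    rw [integral_add_measure, integral_smul_measure, integral_smul_measure, integral_dirac,
      integral_dirac]
    · simp [ENNReal.toReal_ofReal hp0, ENNReal.toReal_ofReal hq0]
    all_goals exact (integrable_dirac enorm_lt_top).smul_measure ENNReal.ofReal_ne_top
  have hsupp : ∀ᵐ x ∂μ, id x ∈ Set.Icc (-p) (1 - p) := by
    rw [ae_add_measure_iff]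
    exact ⟨Measure.ae_smul_measure (by simp [ae_dirac_eq]) _,
      Measure.ae_smul_measure (by simp [ae_dirac_eq]) _⟩
  have hoeffding := (hasSubgaussianMGF_of_mem_Icc_of_integral_eq_zero aemeasurable_id hsupp
    (by rw [hint]; simp; ring)).mgf_le s
  rw [show 1 - p - -p = 1 by ring] at hoeffding
  calc (1 - p) + p * exp s = exp (p * s) * mgf id μ s := by
        simp only [mgf, hint, id, mul_add, mul_left_comm (exp (p * s)), ← exp_add]
        ring_nf
        rw [exp_zero]
        ring
    _ ≤ exp (p * s) * exp (s ^ 2 / 8) := by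
        gcongr; exact hoeffding.trans_eq (by norm_num; ring_nf)
    _ = exp (p * s + s ^ 2 / 8) := (exp_add _ _).symm

lemma sum_Ico_div_sq_le {r : ℕ} (hr : 0 < r) (n : ℕ) :
    ∑ k ∈ Ico r (n + r), ((r : ℝ) / k) ^ 2 ≤ n * (r + 1) / (n + r) := by
  induction n with
  | zero => simp
  | succ n ih =>
    have hnr : (0 : ℝ) < n + r := by positivity
    rw [add_right_comm, sum_Ico_succ_top (by omega)]
    calc _ ≤ n * (r + 1) / (n + r) + ((r : ℝ) / (n + r)) ^ 2 := by push_cast; gcongr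
      _ ≤ _ := by
        rw [div_pow, div_add_div _ _ hnr.ne' (by positivity), div_le_div_iff₀ (by positivity)
          (by positivity)]
        push_cast
        nlinarith [mul_nonneg (mul_nonneg n.cast_nonneg r.cast_nonneg) hnr.le]

lemma succ_mul_choose_succ (M k : ℕ) : (k + 1) * M.choose (k + 1) = M * (M - 1).choose k := by
  cases M with
  | zero => simp
  | succ M => rw [Nat.add_sub_cancel, Nat.add_one_mul_choose_eq, mul_comm]

/-- The number of `n`-subsets of an `(n + r)`-set meeting a fixed `m`-subset in `j` points. -/
def hypergeomCount (n r m j : ℕ) : ℕ := m.choose j * (n + r - m).choose (n - j)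

lemma succ_mul_hypergeomCount_succ (n r m j : ℕ) :
    (j + 1) * hypergeomCount (n + 1) r m (j + 1) = m * hypergeomCount n r (m - 1) j := by
  rw [hypergeomCount, hypergeomCount, ← mul_assoc, succ_mul_choose_succ, Nat.add_sub_add_right]
  rcases Nat.eq_zero_or_pos m with rfl | hm
  · simp
  · rw [show n + 1 + r - m = n + r - (m - 1) by omega, mul_assoc]

lemma sub_mul_hypergeomCount {n j : ℕ} (r m : ℕ) (hj : j ≤ n) :
    (n + 1 - j) * hypergeomCount (n + 1) r m j = (n + 1 + r - m) * hypergeomCount n r m j := by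
  rw [hypergeomCount, hypergeomCount, mul_left_comm, show n + 1 - j = n - j + 1 by omega,
    succ_mul_choose_succ, show n + 1 + r - m - 1 = n + r - m by omega, mul_left_comm]

/-- `(n + r).choose n` times the moment generating function of the hypergeometric law. -/
noncomputable def hypergeomMGF (n r m : ℕ) (t : ℝ) : ℝ :=
  ∑ j ∈ range (n + 1), hypergeomCount n r m j * exp (t * j)

-- Count samples of size `n + 1` with a distinguished element, according to whether it is marked.
lemma succ_mul_hypergeomMGF_succ (n r m : ℕ) (t : ℝ) :
    (n + 1) * hypergeomMGF (n + 1) r m t =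
      m * exp t * hypergeomMGF n r (m - 1) t + (n + 1 + r - m : ℕ) * hypergeomMGF n r m t := by
  have hmarked : ∑ j ∈ range (n + 1 + 1), (j * hypergeomCount (n + 1) r m j : ℝ) * exp (t * j) =
      m * exp t * hypergeomMGF n r (m - 1) t := by
    rw [sum_range_succ', hypergeomMGF, mul_sum]
    refine (add_eq_left.2 (by simp)).trans (sum_congr rfl fun j _ => ?_)
    have h : ((j + 1 : ℕ) * hypergeomCount (n + 1) r m (j + 1) : ℝ) =
        m * hypergeomCount n r (m - 1) j := by exact_mod_cast succ_mul_hypergeomCount_succ n r m j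
    rw [h, Nat.cast_succ, mul_add_one, exp_add]
    ring
  have hunmarked : ∑ j ∈ range (n + 1 + 1),
      ((n + 1 - j : ℕ) * hypergeomCount (n + 1) r m j : ℝ) * exp (t * j) =
      (n + 1 + r - m : ℕ) * hypergeomMGF n r m t := by
    rw [sum_range_succ, hypergeomMGF, mul_sum]
    refine (add_eq_left.2 (by simp)).trans (sum_congr rfl fun j hj => ?_)
    have h : ((n + 1 - j : ℕ) * hypergeomCount (n + 1) r m j : ℝ) =
        (n + 1 + r - m : ℕ) * hypergeomCount n r m j := by
      exact_mod_cast sub_mul_hypergeomCount r m (Nat.lt_succ_iff.1 (mem_range.1 hj))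
    rw [h, mul_assoc]
  rw [← hmarked, ← hunmarked, ← sum_add_distrib, hypergeomMGF, mul_sum]
  refine sum_congr rfl fun j hj => ?_
  rw [Nat.cast_sub (Nat.lt_succ_iff.1 (mem_range.1 hj))]
  push_cast
  ring

-- Divided by `(n + 1 + r) * exp (t * n * m / (n + r))`, the left side is the moment generating
-- function at `t * r / (n + r)` of a Bernoulli variable with parameter `m / (n + 1 + r)`.
lemma hypergeom_step_le {n r m t : ℝ} (hn : 0 ≤ n) (hr : 0 < r) (hm0 : 0 ≤ m)
    (hm : m ≤ n + 1 + r) :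
    m * exp t * exp (t * n * (m - 1) / (n + r)) + (n + 1 + r - m) * exp (t * n * m / (n + r)) ≤
      (n + 1 + r) * exp (t * (n + 1) * m / (n + 1 + r) + (t * r / (n + r)) ^ 2 / 8) := by
  have hnr : 0 < n + r := by linarith
  have hN : 0 < n + 1 + r := by linarith
  set p := m / (n + 1 + r)
  set s := t * r / (n + r)
  have hfactor : m * exp t * exp (t * n * (m - 1) / (n + r)) +
      (n + 1 + r - m) * exp (t * n * m / (n + r)) =
      (n + 1 + r) * exp (t * n * m / (n + r)) * ((1 - p) + p * exp s) := by
    rw [mul_assoc, ← exp_add, show t + t * n * (m - 1) / (n + r) = t * n * m / (n + r) + s by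
      simp only [s]; field_simp; ring, exp_add]
    simp only [p]; field_simp; ring
  have hexponent : t * n * m / (n + r) + p * s = t * (n + 1) * m / (n + 1 + r) := by
    simp only [p, s]; field_simp; ring
  calc _ = (n + 1 + r) * exp (t * n * m / (n + r)) * ((1 - p) + p * exp s) := hfactor
    _ ≤ (n + 1 + r) * exp (t * n * m / (n + r)) * exp (p * s + s ^ 2 / 8) := by
      gcongr; exact one_sub_add_mul_exp_le p s (by positivity) ((div_le_one hN).2 hm)
    _ = _ := by rw [mul_assoc, ← exp_add, ← add_assoc, hexponent]

theorem hypergeomMGF_le {r : ℕ} (hr : 0 < r) (t : ℝ) (n : ℕ) {m : ℕ} (hm : m ≤ n + r) :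
    hypergeomMGF n r m t ≤ (n + r).choose n *
      exp (t * n * m / (n + r) + t ^ 2 / 8 * ∑ k ∈ Ico r (n + r), ((r : ℝ) / k) ^ 2) := by
  induction n generalizing m with
  | zero => simp [hypergeomMGF, hypergeomCount]
  | succ n ih =>
    set Q := t ^ 2 / 8 * ∑ k ∈ Ico r (n + r), ((r : ℝ) / k) ^ 2
    set C : ℝ := ↑((n + r).choose n)
    have hmarked : m * hypergeomMGF n r (m - 1) t ≤
        m * (C * exp (t * n * (m - 1) / (n + r) + Q)) := by
      rcases Nat.eq_zero_or_pos m with rfl | hm0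
      · simp
      · have := ih (m := m - 1) (by omega)
        rw [Nat.cast_sub hm0, Nat.cast_one] at this
        gcongr
    have hunmarked : (n + 1 + r - m : ℕ) * hypergeomMGF n r m t ≤
        (n + 1 + r - m : ℕ) * (C * exp (t * n * m / (n + r) + Q)) := by
      rcases eq_or_lt_of_le hm with rfl | hm'
      · simp
      · gcongr; exact ih (by omega)
    have hchoose : (n + 1 : ℝ) * (n + 1 + r).choose (n + 1) = (n + 1 + r) * C := by
      have := Nat.add_one_mul_choose_eq (n + r) n
      rw [show n + r + 1 = n + 1 + r by omega] at this
      simp only [C]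
      rw [mul_comm (n + 1 : ℝ)]
      exact_mod_cast this.symm
    have hsum : Q + (t * r / (n + r)) ^ 2 / 8 =
        t ^ 2 / 8 * ∑ k ∈ Ico r (n + 1 + r), ((r : ℝ) / k) ^ 2 := by
      rw [add_right_comm, sum_Ico_succ_top (by omega), mul_add]
      push_cast
      ring
    refine le_of_mul_le_mul_left ?_ (by positivity : (0 : ℝ) < n + 1)
    calc (n + 1 : ℝ) * hypergeomMGF (n + 1) r m t
        = m * exp t * hypergeomMGF n r (m - 1) t + (n + 1 + r - m : ℕ) * hypergeomMGF n r m t :=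
          succ_mul_hypergeomMGF_succ n r m t
      _ ≤ exp t * (m * (C * exp (t * n * (m - 1) / (n + r) + Q))) +
          (n + 1 + r - m : ℕ) * (C * exp (t * n * m / (n + r) + Q)) := by
          rw [mul_comm (m : ℝ), mul_assoc]; gcongr
      _ = C * exp Q * (m * exp t * exp (t * n * (m - 1) / (n + r)) +
          (n + 1 + r - m) * exp (t * n * m / (n + r))) := by
          rw [Nat.cast_sub hm]; push_cast; simp only [exp_add]; ring
      _ ≤ C * exp Q *
          ((n + 1 + r) * exp (t * (n + 1) * m / (n + 1 + r) + (t * r / (n + r)) ^ 2 / 8)) := by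
          gcongr
          exact hypergeom_step_le (by positivity) (by exact_mod_cast hr) (by positivity)
            (by exact_mod_cast hm)
      _ = _ := by
          rw [← hsum]
          push_cast
          simp only [exp_add]
          linear_combination (exp Q * exp (t * (n + 1) * m / (n + 1 + r)) *
            exp ((t * r / (n + r)) ^ 2 / 8)) * hchoose.symm

theorem hypergeom_tail_le {n r m : ℕ} (hn : 0 < n) (hr : 0 < r) (hm : m ≤ n + r) {ε : ℝ}
    (hε : 0 ≤ ε) :
    ∑ j ∈ (range (n + 1)).filter (fun j : ℕ => n * m / (n + r) + ε ≤ (j : ℝ)),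
        (hypergeomCount n r m j : ℝ) ≤
      (n + r).choose n * exp (-(2 * ε ^ 2 * (n + r) / (n * (r + 1)))) := by
  set μ : ℝ := n * m / (n + r)
  -- minimises the Chernoff exponent `-t ε + t² n (r + 1) / (8 (n + r))`
  set t : ℝ := 4 * ε * (n + r) / (n * (r + 1))
  have ht : 0 ≤ t := by positivity
  calc _ ≤ ∑ j ∈ (range (n + 1)).filter (fun j : ℕ => μ + ε ≤ (j : ℝ)),
        (hypergeomCount n r m j : ℝ) * exp (t * j - t * (μ + ε)) := by
        refine sum_le_sum fun j hj => le_mul_of_one_le_right (by positivity) (one_le_exp ?_)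
        have := (mem_filter.1 hj).2
        rw [← mul_sub]
        exact mul_nonneg ht (by linarith)
    _ ≤ ∑ j ∈ range (n + 1),
        (hypergeomCount n r m j : ℝ) * exp (t * j - t * (μ + ε)) :=
        sum_le_sum_of_subset_of_nonneg (filter_subset _ _) fun _ _ _ => by positivity
    _ = exp (-(t * (μ + ε))) * hypergeomMGF n r m t := by
        rw [hypergeomMGF, mul_sum]
        refine sum_congr rfl fun j _ => ?_
        rw [sub_eq_add_neg, exp_add]; ring
    _ ≤ exp (-(t * (μ + ε))) *
        ((n + r).choose n * exp (t * n * m / (n + r) + t ^ 2 / 8 * (n * (r + 1) / (n + r)))) := by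
        gcongr
        refine (hypergeomMGF_le hr t n hm).trans ?_
        gcongr
        exact sum_Ico_div_sq_le hr n
    _ = _ := by
        rw [mul_left_comm, ← exp_add]
        congr 2
        simp only [μ, t]
        field_simp
        ring

section Count
variable {α : Type*} [Fintype α] [DecidableEq α]

lemma card_filter_card_inter_eq (T : Finset α) {n j : ℕ} (hj : j ≤ n) :
    #{u ∈ powersetCard n univ | #(u ∩ T) = j} =
      (#T).choose j * (Fintype.card α - #T).choose (n - j) := by
  rw [← card_compl T, ← card_powersetCard j T, ← card_powersetCard (n - j) Tᶜ, ← card_product]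
  have hsplit {p : Finset α × Finset α} (h₁ : p.1 ⊆ T) (h₂ : p.2 ⊆ Tᶜ) :
      (p.1 ∪ p.2) ∩ T = p.1 ∧ (p.1 ∪ p.2) \ T = p.2 := by
    constructor <;> ext x <;> have := @h₁ x <;> have := @h₂ x <;> simp at * <;> tauto
  refine card_nbij' (fun u => (u ∩ T, u \ T)) (fun p => p.1 ∪ p.2) ?_ ?_ ?_ ?_
  · intro u hu
    simp only [coe_filter, mem_powersetCard, subset_univ, true_and, Set.mem_ofPred_eq] at hu
    have := card_inter_add_card_sdiff u T
    simp only [coe_product, Set.mem_prod, mem_coe, mem_powersetCard]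
    exact ⟨⟨inter_subset_right, hu.2⟩, fun x hx => by simp [(mem_sdiff.1 hx).2], by omega⟩
  · intro p hp
    simp only [coe_product, Set.mem_prod, mem_coe, mem_powersetCard] at hp
    obtain ⟨⟨h₁, hc₁⟩, h₂, hc₂⟩ := hp
    have hdisj : Disjoint p.1 p.2 :=
      disjoint_of_subset_left h₁ (subset_compl_iff_disjoint_left.1 h₂)
    simp [(hsplit h₁ h₂).1, card_union_of_disjoint hdisj, hc₁, hc₂]
    omega
  · intro u _; exact sup_inf_sdiff u T
  · intro p hp
    simp only [coe_product, Set.mem_prod, mem_coe, mem_powersetCard] at hp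
    obtain ⟨⟨h₁, -⟩, h₂, -⟩ := hp
    simp [hsplit h₁ h₂]

lemma sum_powersetCard_comp_card_inter {M : Type*} [AddCommMonoid M] {n r : ℕ}
    (hα : Fintype.card α = n + r) (T : Finset α) (f : ℕ → M) :
    ∑ u ∈ powersetCard n univ, f #(u ∩ T) =
      ∑ j ∈ range (n + 1), hypergeomCount n r #T j • f j := by
  have hmaps : ∀ u ∈ powersetCard n (univ : Finset α), #(u ∩ T) ∈ range (n + 1) := by
    intro u hu
    rw [mem_range, Nat.lt_succ_iff, ← (mem_powersetCard.1 hu).2]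
    exact card_le_card inter_subset_left
  rw [← sum_fiberwise_of_maps_to hmaps]
  refine sum_congr rfl fun j hj => ?_
  rw [hypergeomCount, ← hα, ← card_filter_card_inter_eq T (Nat.lt_succ_iff.1 (mem_range.1 hj)),
    ← sum_const]
  exact sum_congr rfl fun u hu => by rw [(mem_filter.1 hu).2]

theorem serfling_card_le {n r : ℕ} (hn : 0 < n) (hr : 0 < r) (hα : Fintype.card α = n + r)
    (T : Finset α) {ε : ℝ} (hε : 0 ≤ ε) :
    (#{u ∈ powersetCard n univ | n * #T / (n + r) + ε ≤ (#(u ∩ T) : ℝ)} : ℝ) ≤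
      (n + r).choose n * exp (-(2 * ε ^ 2 * (n + r) / (n * (r + 1)))) := by
  rw [natCast_card_filter, sum_powersetCard_comp_card_inter hα T
    (fun j => if n * #T / (n + r) + ε ≤ (j : ℝ) then (1 : ℝ) else 0)]
  simp only [nsmul_eq_mul, mul_ite, mul_one, mul_zero, ← sum_filter]
  exact hypergeom_tail_le hn hr (hα ▸ card_le_univ T) hε

end Count

section SampleSums
variable {ι : Type*} [Fintype ι] [DecidableEq ι]

lemma measurableSet_sum_le_and_le_sum_compl (s : Finset ι) (x y : ℝ) :
    MeasurableSet {z : ι → ℝ | ∑ i ∈ s, z i ≤ x ∧ y ≤ ∑ i ∈ sᶜ, z i} :=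
  (measurableSet_le (measurable_sum s fun i _ => measurable_pi_apply i) measurable_const).inter
    (measurableSet_le measurable_const (measurable_sum sᶜ fun i _ => measurable_pi_apply i))

lemma sum_eq_card_inter_of_zero_or_one {z : ι → ℝ} (hz : ∀ i, z i = 0 ∨ z i = 1)
    (u : Finset ι) :
    ∑ i ∈ u, z i = #(u ∩ univ.filter (z · = 1)) := by
  rw [← filter_mem_eq_inter, natCast_card_filter]
  refine sum_congr rfl fun i _ => ?_
  rcases hz i with h | h <;> simp [h]

theorem card_sum_le_and_le_sum_compl {a b : ℕ} (ha : 0 < a) (hb : 0 < b)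
    (hι : Fintype.card ι = a + b) (δ : ℝ) {ν : ℝ} (hν : 0 ≤ ν) {z : ι → ℝ}
    (hz : ∀ i, z i = 0 ∨ z i = 1) :
    (#{s ∈ powersetCard a univ | ∑ i ∈ s, z i ≤ a * δ ∧ b * (δ + ν) ≤ ∑ i ∈ sᶜ, z i} : ℝ) ≤
      (a + b).choose a * exp (-(2 * b * (a : ℝ) ^ 2 * ν ^ 2) / ((a + b) * (a + 1))) := by
  set T : Finset ι := univ.filter (z · = 1)
  have hab : (0 : ℝ) < b + a := by positivity
  have hinj : #{s ∈ powersetCard a univ | ∑ i ∈ s, z i ≤ a * δ ∧ b * (δ + ν) ≤ ∑ i ∈ sᶜ, z i} ≤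
      #{u ∈ powersetCard b univ | b * #T / (b + a) + a * b * ν / (b + a) ≤ (#(u ∩ T) : ℝ)} := by
    refine card_le_card_of_injOn compl ?_ compl_injective.injOn
    intro s hs
    simp only [coe_filter, mem_powersetCard, subset_univ, true_and, Set.mem_ofPred_eq] at hs ⊢
    obtain ⟨hcard, hlow, hhigh⟩ := hs
    refine ⟨by rw [card_compl, hcard]; omega, ?_⟩
    have hT : (#T : ℝ) = ∑ i ∈ s, z i + ∑ i ∈ sᶜ, z i := by
      rw [sum_add_sum_compl, sum_eq_card_inter_of_zero_or_one hz, univ_inter]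
    rw [hT, ← sum_eq_card_inter_of_zero_or_one hz, ← add_div, div_le_iff₀ hab]
    linear_combination (b : ℝ) * hlow + (a : ℝ) * hhigh
  calc _ ≤ (#{u ∈ powersetCard b univ |
          b * #T / (b + a) + a * b * ν / (b + a) ≤ (#(u ∩ T) : ℝ)} : ℝ) := by
        exact_mod_cast hinj
    _ ≤ _ := serfling_card_le (ε := a * b * ν / (b + a)) hb ha (by rw [hι, add_comm]) T
        (by positivity)
    _ = _ := by
        rw [add_comm b a, Nat.choose_symm_add]
        congr 2
        field_simp
        ring

end SampleSums

open Classical in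
lemma sum_measure_le_of_card_le {Ω ι : Type*} [MeasurableSpace Ω] (μ : Measure Ω) (S : Finset ι)
    {A : ι → Set Ω} (hA : ∀ i ∈ S, MeasurableSet (A i)) {K : ℝ≥0∞}
    (hK : ∀ ω, (#{i ∈ S | ω ∈ A i} : ℝ≥0∞) ≤ K) :
    ∑ i ∈ S, μ (A i) ≤ K * μ Set.univ := by
  calc ∑ i ∈ S, μ (A i) = ∑ i ∈ S, ∫⁻ ω, (A i).indicator 1 ω ∂μ :=
        sum_congr rfl fun i hi => (lintegral_indicator_one (hA i hi)).symm
    _ = ∫⁻ ω, ∑ i ∈ S, (A i).indicator 1 ω ∂μ :=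
        (lintegral_finsetSum _ fun i hi => measurable_one.indicator (hA i hi)).symm
    _ ≤ ∫⁻ _, K ∂μ := lintegral_mono fun ω => by simpa [Set.indicator_apply] using hK ω
    _ = K * μ Set.univ := lintegral_const K

theorem sampling_without_replacement_bound_general {Ω : Type*} [MeasureSpace Ω]
    [IsProbabilityMeasure (ℙ : Measure Ω)]
    (a b N : ℕ) (ha : 0 < a) (hb : 0 < b) (hN : N = a + b)
    (Z : Fin N → Ω → ℝ) (hZmeas : ∀ i, Measurable (Z i))
    (hZval : ∀ i ω, Z i ω = 0 ∨ Z i ω = 1)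
    (P : Ω → Finset (Fin N))
    (hcard : ∀ ω, (P ω).card = a)
    (hunif : ∀ s : Finset (Fin N), s.card = a →
      ℙ {ω | P ω = s} = ENNReal.ofReal (1 / (N.choose a)))
    (hindep : ∀ (s : Finset (Fin N)) (E : Set (Fin N → ℝ)), MeasurableSet E →
      ℙ ({ω | P ω = s} ∩ {ω | (fun i => Z i ω) ∈ E}) =
        ℙ {ω | P ω = s} * ℙ {ω | (fun i => Z i ω) ∈ E})
    (δ ν : ℝ) (hν : 0 < ν) :
    ℙ {ω | (∑ i ∈ P ω, Z i ω) ≤ (a : ℝ) * δ ∧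
        (b : ℝ) * (δ + ν) ≤ ∑ i ∈ (P ω)ᶜ, Z i ω} ≤
      ENNReal.ofReal (Real.exp (-(2 * b * (a : ℝ) ^ 2 * ν ^ 2) /
        (((a : ℝ) + b) * ((a : ℝ) + 1)))) := by
  set B := Real.exp (-(2 * b * (a : ℝ) ^ 2 * ν ^ 2) / (((a : ℝ) + b) * ((a : ℝ) + 1)))
  set E : Finset (Fin N) → Set (Fin N → ℝ) :=
    fun s => {z | ∑ i ∈ s, z i ≤ a * δ ∧ b * (δ + ν) ≤ ∑ i ∈ sᶜ, z i}
  have hE (s : Finset (Fin N)) : MeasurableSet (E s) :=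
    measurableSet_sum_le_and_le_sum_compl s _ _
  have hZ : Measurable fun ω i => Z i ω := measurable_pi_lambda _ hZmeas
  have hC : (0 : ℝ) < N.choose a := by exact_mod_cast Nat.choose_pos (by omega)
  calc _ ≤ ∑ s ∈ powersetCard a univ, ℙ ({ω | P ω = s} ∩ {ω | (fun i => Z i ω) ∈ E s}) := by
        refine (measure_mono fun ω hω => ?_).trans (measure_biUnion_finset_le _ _)
        exact Set.mem_iUnion₂.2 ⟨P ω, mem_powersetCard.2 ⟨subset_univ _, hcard ω⟩, rfl, hω⟩
    _ = ENNReal.ofReal (1 / N.choose a) *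
        ∑ s ∈ powersetCard a univ, ℙ {ω | (fun i => Z i ω) ∈ E s} := by
        rw [mul_sum]
        exact sum_congr rfl fun s hs => by rw [hindep s _ (hE s), hunif s (mem_powersetCard.1 hs).2]
    _ ≤ ENNReal.ofReal (1 / N.choose a) * (ENNReal.ofReal (N.choose a * B) * ℙ Set.univ) := by
        gcongr
        refine sum_measure_le_of_card_le _ _ (fun s _ => hZ (hE s)) fun ω => ?_
        rw [← ENNReal.ofReal_natCast]
        refine ENNReal.ofReal_le_ofReal ?_
        convert card_sum_le_and_le_sum_compl ha hb (by simp [hN]) δ hν.le (hZval · ω)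
        exact Iff.rfl
    _ = ENNReal.ofReal B := by
        rw [measure_univ, mul_one, ← ENNReal.ofReal_mul (by positivity), one_div,
          inv_mul_cancel_left₀ hC.ne']

/-- Law of large numbers for sampling without replacement (Lemma 6 of [TL17]):
if `Π` is a uniformly random subset of `{1,…,N}` of size `a` (with `N = a + b`),
independent of `{0,1}`-valued random variables `Z₁,…,Z_N`, then the probability
that `∑_{i∈Π} Z_i ≤ aδ` and `∑_{i∉Π} Z_i ≥ b(δ+ν)` is at most
`exp(−2ba²ν²/((a+b)(a+1)))`. -/
theorem sampling_without_replacement_bound {Ω : Type*} [MeasureSpace Ω]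
    [IsProbabilityMeasure (ℙ : Measure Ω)]
    (a b N : ℕ) (ha : 0 < a) (hb : 0 < b) (hN : N = a + b)
    (Z : Fin N → Ω → ℝ) (hZmeas : ∀ i, Measurable (Z i))
    (hZval : ∀ i ω, Z i ω = 0 ∨ Z i ω = 1)
    (P : Ω → Finset (Fin N))
    (hcard : ∀ ω, (P ω).card = a)
    (hunif : ∀ s : Finset (Fin N), s.card = a →
      ℙ {ω | P ω = s} = ENNReal.ofReal (1 / (N.choose a)))
    (hindep : ∀ (s : Finset (Fin N)) (E : Set (Fin N → ℝ)), MeasurableSet E →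
      ℙ ({ω | P ω = s} ∩ {ω | (fun i => Z i ω) ∈ E}) =
        ℙ {ω | P ω = s} * ℙ {ω | (fun i => Z i ω) ∈ E})
    (δ ν : ℝ) (hδ : 0 ≤ δ) (hν : 0 < ν) :
    ℙ {ω | (∑ i ∈ P ω, Z i ω) ≤ (a : ℝ) * δ ∧
        (b : ℝ) * (δ + ν) ≤ ∑ i ∈ (P ω)ᶜ, Z i ω} ≤
      ENNReal.ofReal (Real.exp (-(2 * b * (a : ℝ) ^ 2 * ν ^ 2) /
        (((a : ℝ) + b) * ((a : ℝ) + 1)))) :=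
  sampling_without_replacement_bound_general a b N ha hb hN Z hZmeas hZval P hcard hunif hindep δ ν
    hν
end

section
/- Let n be a positive natural number, let δ ≥ 0, ν > 0 with ν ≤ 1/2 − δ, let T > 1/2 be a real number, and let δ_mismatch ≥ 0. Let x, y : Fin n → {0,1} be bit strings and let r := #{i | x i = 0}/n. Define δ'(ν) := δ_mismatch + ν − (1/(2T) − ν)·(1 − 2δ − 2ν). If (1) r ≥ 1/(2T) − ν, (2) #{i | x i = 0 ∧ y i = 1} ≤ n·r·(δ + ν), and (3) #{i | y i = 0} ≤ n·(δ_mismatch + ν), then #{i | x i ≠ y i} ≤ n·δ'(ν). -/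
/-- The deterministic counting bound used in the "fourth probability" of the proof:
if `r ≥ 1/(2T) − ν`, `#{i | x i = 0 ∧ y i = 1} ≤ n·r·(δ+ν)` and
`#{i | y i = 0} ≤ n·(δ_mismatch+ν)`, where `r = #{i | x i = 0}/n`, then
`#{i | x i ≠ y i} ≤ n·δ'(ν)` with
`δ'(ν) = δ_mismatch + ν − (1/(2T) − ν)(1 − 2δ − 2ν)`. -/
theorem error_count_bound (n : ℕ) (hn : 0 < n) (δ ν T δm : ℝ)
    (hδ : 0 ≤ δ) (hν : 0 < ν) (hνδ : ν ≤ 1 / 2 - δ) (hT : 1 / 2 < T) (hδm : 0 ≤ δm)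
    (x y : Fin n → Fin 2)
    (r : ℝ) (hr : r = ((Finset.univ.filter fun i => x i = 0).card : ℝ) / n)
    (h1 : 1 / (2 * T) - ν ≤ r)
    (h2 : ((Finset.univ.filter fun i => x i = 0 ∧ y i = 1).card : ℝ) ≤ n * r * (δ + ν))
    (h3 : ((Finset.univ.filter fun i => y i = 0).card : ℝ) ≤ n * (δm + ν)) :
    ((Finset.univ.filter fun i => x i ≠ y i).card : ℝ) ≤
      n * (δm + ν - (1 / (2 * T) - ν) * (1 - 2 * δ - 2 * ν)) := by
  have htwo : ∀ a : Fin 2, a = 0 ∨ a = 1 := by decide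
  classical
  set A := Finset.univ.filter fun i => x i = 0 ∧ y i = 1 with hA
  set B := Finset.univ.filter fun i => x i = 1 ∧ y i = 0 with hB
  set C := Finset.univ.filter fun i => y i = 0 with hC
  set D := Finset.univ.filter fun i => x i = 0 ∧ y i = 0 with hD
  set X0 := Finset.univ.filter fun i => x i = 0 with hX0
  -- mismatches = A ∪ B
  have hMis : (Finset.univ.filter fun i => x i ≠ y i) = A ∪ B := by
    ext i
    simp only [hA, hB, Finset.mem_union, Finset.mem_filter, Finset.mem_univ, true_and]
    rcases htwo (x i) with hx | hx <;> rcases htwo (y i) with hy | hy <;>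
      simp [hx, hy] <;> decide
  have hABdisj : Disjoint A B := by
    rw [Finset.disjoint_left]
    intro i hi hi'
    simp only [hA, hB, Finset.mem_filter] at hi hi'
    rw [hi.2.1] at hi'
    exact absurd hi'.2.1 (by decide)
  -- C = D ∪ B
  have hCsplit : C = D ∪ B := by
    ext i
    simp only [hC, hD, hB, Finset.mem_union, Finset.mem_filter, Finset.mem_univ, true_and]
    rcases htwo (x i) with hx | hx <;> simp [hx] <;> tauto
  have hDBdisj : Disjoint D B := by
    rw [Finset.disjoint_left]
    intro i hi hi'
    simp only [hD, hB, Finset.mem_filter] at hi hi'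
    rw [hi.2.1] at hi'
    exact absurd hi'.2.1 (by decide)
  -- X0 = D ∪ A
  have hXsplit : X0 = D ∪ A := by
    ext i
    simp only [hX0, hD, hA, Finset.mem_union, Finset.mem_filter, Finset.mem_univ, true_and]
    rcases htwo (y i) with hy | hy <;> simp [hy] <;> tauto
  have hDAdisj : Disjoint D A := by
    rw [Finset.disjoint_left]
    intro i hi hi'
    simp only [hD, hA, Finset.mem_filter] at hi hi'
    rw [hi.2.2] at hi'
    exact absurd hi'.2.2 (by decide)
  have hcard1 : (Finset.univ.filter fun i => x i ≠ y i).card = A.card + B.card := by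
    rw [hMis, Finset.card_union_of_disjoint hABdisj]
  have hcard2 : C.card = D.card + B.card := by
    rw [hCsplit, Finset.card_union_of_disjoint hDBdisj]
  have hcard3 : X0.card = D.card + A.card := by
    rw [hXsplit, Finset.card_union_of_disjoint hDAdisj]
  -- real versions
  have hX0r : (X0.card : ℝ) = n * r := by
    rw [hr]
    field_simp
  have key : ((Finset.univ.filter fun i => x i ≠ y i).card : ℝ)
      = 2 * (A.card : ℝ) + (C.card : ℝ) - (X0.card : ℝ) := by
    rw [hcard1, hcard2, hcard3]
    push_cast
    ring
  rw [key, hX0r]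
  have hfac : (0:ℝ) ≤ 1 - 2 * δ - 2 * ν := by linarith
  have hr' : n * (1 / (2 * T) - ν) * (1 - 2 * δ - 2 * ν) ≤ n * r * (1 - 2 * δ - 2 * ν) := by
    have hn0 : (0:ℝ) ≤ n := Nat.cast_nonneg n
    nlinarith [mul_le_mul_of_nonneg_right h1 (mul_nonneg hn0 hfac)]
  nlinarith
end

section
/- Let H be a complex inner product space, let γ0, γ1, γ+, γ− be nonzero vectors in H, and let p, q be real numbers with 0 < p < 1 and 0 < q < 1. Suppose that for all x ∈ H: p·⟨γ0, x⟩·γ0 + (1 − p)·⟨γ1, x⟩·γ1 = q·⟨γ+, x⟩·γ+ + (1 − q)·⟨γ−, x⟩·γ−. Then the linear span of {γ0, γ1} equals the linear span of {γ+, γ−}; in particular, γ+ and γ− lie in the two-dimensional (or smaller) subspace spanned by γ0 and γ1. -/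
/-!
For `a, b > 0` the operator `T x = a ⟪u, x⟫ u + b ⟪v, x⟫ v` satisfies
`re ⟪x, T x⟫ = a ‖⟪u, x⟫‖² + b ‖⟪v, x⟫‖²`, so its kernel is `(span {u, v})ᗮ`.
Two equal such operators therefore have equal kernels, and a finite-dimensional subspace is
recovered from its orthogonal complement as `Kᗮᗮ = K`.
-/

open Submodule
open scoped InnerProductSpace

section

variable {𝕜 H : Type*} [RCLike 𝕜] [NormedAddCommGroup H] [InnerProductSpace 𝕜 H]

theorem Submodule.mem_orthogonal_span_pair_iff {u v x : H} :
    x ∈ (span 𝕜 {u, v})ᗮ ↔ ⟪u, x⟫_𝕜 = 0 ∧ ⟪v, x⟫_𝕜 = 0 := by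
  rw [span_insert, ← inf_orthogonal, mem_inf, mem_orthogonal_singleton_iff_inner_right,
    mem_orthogonal_singleton_iff_inner_right]

theorem Submodule.orthogonal_orthogonal_span_of_finite {s : Set H} (hs : s.Finite) :
    (span 𝕜 s)ᗮᗮ = span 𝕜 s :=
  haveI := FiniteDimensional.span_of_finite 𝕜 hs
  haveI := (span 𝕜 s).complete_of_finiteDimensional.completeSpace_coe
  orthogonal_orthogonal _

theorem re_inner_weighted_sum_rankOne (a b : ℝ) (u v x : H) :
    RCLike.re ⟪x, (a : 𝕜) • ⟪u, x⟫_𝕜 • u + (b : 𝕜) • ⟪v, x⟫_𝕜 • v⟫_𝕜 =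
      a * ‖⟪u, x⟫_𝕜‖ ^ 2 + b * ‖⟪v, x⟫_𝕜‖ ^ 2 := by
  rw [inner_add_right, inner_smul_right, inner_smul_right, inner_smul_right, inner_smul_right,
    ← inner_conj_symm x u, ← inner_conj_symm x v, RCLike.mul_conj, RCLike.mul_conj]
  norm_cast

theorem weighted_sum_rankOne_eq_zero_iff {a b : ℝ} (ha : 0 < a) (hb : 0 < b) (u v x : H) :
    (a : 𝕜) • ⟪u, x⟫_𝕜 • u + (b : 𝕜) • ⟪v, x⟫_𝕜 • v = 0 ↔ x ∈ (span 𝕜 {u, v})ᗮ := by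
  rw [mem_orthogonal_span_pair_iff]
  constructor
  · intro h
    have hre := congrArg (fun y => RCLike.re ⟪x, y⟫_𝕜) h
    simp only [re_inner_weighted_sum_rankOne, inner_zero_right, map_zero] at hre
    obtain ⟨hu, hv⟩ := (add_eq_zero_iff_of_nonneg (by positivity) (by positivity)).1 hre
    simpa [ha.ne', hb.ne'] using And.intro hu hv
  · rintro ⟨hu, hv⟩
    simp [hu, hv]

theorem span_pair_eq_of_weighted_sum_rankOne_eq {a b c d : ℝ} (ha : 0 < a) (hb : 0 < b)
    (hc : 0 < c) (hd : 0 < d) {u v u' v' : H}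
    (h : ∀ x, (a : 𝕜) • ⟪u, x⟫_𝕜 • u + (b : 𝕜) • ⟪v, x⟫_𝕜 • v =
      (c : 𝕜) • ⟪u', x⟫_𝕜 • u' + (d : 𝕜) • ⟪v', x⟫_𝕜 • v') :
    span 𝕜 {u, v} = span 𝕜 {u', v'} := by
  have horth : (span 𝕜 {u, v})ᗮ = (span 𝕜 {u', v'})ᗮ := by
    ext x
    rw [← weighted_sum_rankOne_eq_zero_iff ha hb, ← weighted_sum_rankOne_eq_zero_iff hc hd, h]
  rw [← orthogonal_orthogonal_span_of_finite (Set.toFinite {u, v}), horth,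
    orthogonal_orthogonal_span_of_finite (Set.toFinite _)]

end

theorem span_eq_of_mixed_state_eq_general {H : Type*} [NormedAddCommGroup H] [InnerProductSpace ℂ H]
    (γ0 γ1 γp γm : H)
    (p q : ℝ) (hp0 : 0 < p) (hp1 : p < 1) (hq0 : 0 < q) (hq1 : q < 1)
    (heq : ∀ x : H,
      (p : ℂ) • (inner ℂ γ0 x : ℂ) • γ0 + ((1 - p : ℝ) : ℂ) • (inner ℂ γ1 x : ℂ) • γ1 =
        (q : ℂ) • (inner ℂ γp x : ℂ) • γp + ((1 - q : ℝ) : ℂ) • (inner ℂ γm x : ℂ) • γm) :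
    Submodule.span ℂ ({γ0, γ1} : Set H) = Submodule.span ℂ ({γp, γm} : Set H) :=
  span_pair_eq_of_weighted_sum_rankOne_eq hp0 (sub_pos.2 hp1) hq0 (sub_pos.2 hq1) heq

/-- If the mixed states coincide, i.e.
`p|γ0⟩⟨γ0| + (1−p)|γ1⟩⟨γ1| = q|γ+⟩⟨γ+| + (1−q)|γ−⟩⟨γ−|` with `0 < p < 1`, `0 < q < 1`
and all four vectors nonzero, then `span{γ0, γ1} = span{γ+, γ−}`. -/
theorem span_eq_of_mixed_state_eq {H : Type*} [NormedAddCommGroup H] [InnerProductSpace ℂ H]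
    (γ0 γ1 γp γm : H) (h0 : γ0 ≠ 0) (h1 : γ1 ≠ 0) (hp : γp ≠ 0) (hm : γm ≠ 0)
    (p q : ℝ) (hp0 : 0 < p) (hp1 : p < 1) (hq0 : 0 < q) (hq1 : q < 1)
    (heq : ∀ x : H,
      (p : ℂ) • (inner ℂ γ0 x : ℂ) • γ0 + ((1 - p : ℝ) : ℂ) • (inner ℂ γ1 x : ℂ) • γ1 =
        (q : ℂ) • (inner ℂ γp x : ℂ) • γp + ((1 - q : ℝ) : ℂ) • (inner ℂ γm x : ℂ) • γm) :
    Submodule.span ℂ ({γ0, γ1} : Set H) = Submodule.span ℂ ({γp, γm} : Set H) :=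
  span_eq_of_mixed_state_eq_general γ0 γ1 γp γm p q hp0 hp1 hq0 hq1 heq
end
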